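/- Let D be a digraph on vertex set {1,…,n} with at least one arc. Then the following are equivalent: (i) l(D)=1; (ii) ⟨D⟩ is aperiodic, i.e. every subgroup of ⟨D⟩ is trivial; (iii) ⟨D⟩ is H-trivial. -/

import Mathlib

/-!
A transformation has only cycles of length 1 exactly when each of its periodic points is
fixed. If every element of a transformation semigroup `S` has this property, `S` is
`H`-trivial: when `y = x·s` and `x`, `y` are `L`-related, they have the same range, which `s`
maps onto itself, so the range lies in the image of `s^n`, i.e. among the periodic points of `s`,
which `s` fixes; hence `y = x`. Every subgroup lies in an `H`-class, so `H`-triviality gives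
aperiodicity. Conversely, if `α ∈ S` has a periodic point that is not fixed, the iterates
`α^m` with `m ≥ n!` form a cyclic group with identity `α^{n!}` in which `α^{n!} ≠ α^{n!+1}`.
-/

/-- The transformation of `{1,…,n}` sending `a` to `b` and fixing all other points. -/
def arcT {n : ℕ} (a b : Fin n) : Fin n → Fin n := fun v => if v = a then b else v

/-- The semigroup `⟨D⟩` generated by the arcs of the digraph `D`; transformations act on
the right, so a product `ε₁ε₂⋯ε_k` is the function `ε_k ∘ ⋯ ∘ ε₁`. -/
def genSg {n : ℕ} (D : Set (Fin n × Fin n)) : Set (Fin n → Fin n) :=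
  { α | ∃ l : List (Fin n × Fin n), l ≠ [] ∧ (∀ p ∈ l, p ∈ D) ∧
      α = l.foldl (fun f p => arcT p.1 p.2 ∘ f) id }

/-- The product `x·y` in the right-action convention: apply `x` first, then `y`. -/
def sgMul {n : ℕ} (x y : Fin n → Fin n) : Fin n → Fin n := y ∘ x

/-- The right ideal `xS¹ = {x} ∪ xS`. -/
def rIdeal {n : ℕ} (S : Set (Fin n → Fin n)) (x : Fin n → Fin n) : Set (Fin n → Fin n) :=
  insert x { y | ∃ s ∈ S, y = sgMul x s }

/-- The left ideal `S¹x = {x} ∪ Sx`. -/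
def lIdeal {n : ℕ} (S : Set (Fin n → Fin n)) (x : Fin n → Fin n) : Set (Fin n → Fin n) :=
  insert x { y | ∃ s ∈ S, y = sgMul s x }

/-- The two-sided ideal `S¹xS¹`. -/
def jIdeal {n : ℕ} (S : Set (Fin n → Fin n)) (x : Fin n → Fin n) : Set (Fin n → Fin n) :=
  { y | ∃ s ∈ insert id S, ∃ t ∈ insert id S, y = sgMul s (sgMul x t) }

def RRel {n : ℕ} (S : Set (Fin n → Fin n)) (x y : Fin n → Fin n) : Prop :=
  rIdeal S x = rIdeal S y

def LRel {n : ℕ} (S : Set (Fin n → Fin n)) (x y : Fin n → Fin n) : Prop :=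
  lIdeal S x = lIdeal S y

def JRel {n : ℕ} (S : Set (Fin n → Fin n)) (x y : Fin n → Fin n) : Prop :=
  jIdeal S x = jIdeal S y

def RTrivial {n : ℕ} (S : Set (Fin n → Fin n)) : Prop :=
  ∀ x ∈ S, ∀ y ∈ S, RRel S x y → x = y

def LTrivial {n : ℕ} (S : Set (Fin n → Fin n)) : Prop :=
  ∀ x ∈ S, ∀ y ∈ S, LRel S x y → x = y

def HTrivial {n : ℕ} (S : Set (Fin n → Fin n)) : Prop :=
  ∀ x ∈ S, ∀ y ∈ S, RRel S x y → LRel S x y → x = y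

def JTrivial {n : ℕ} (S : Set (Fin n → Fin n)) : Prop :=
  ∀ x ∈ S, ∀ y ∈ S, JRel S x y → x = y

/-- `α` has a cycle of length `k`: `k` distinct points `a₀,…,a_{k-1}` with
`α(aᵢ) = a_{i+1 mod k}`. -/
def IsCycleOf {n : ℕ} (α : Fin n → Fin n) (k : ℕ) : Prop :=
  0 < k ∧ ∃ a : ZMod k → Fin n, Function.Injective a ∧ ∀ i, α (a i) = a (i + 1)

/-- `l(D)`: the maximal length of a cycle of an element of `⟨D⟩`. -/
noncomputable def lD {n : ℕ} (D : Set (Fin n × Fin n)) : ℕ :=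
  sSup { k | ∃ α ∈ genSg D, IsCycleOf α k }

/-- The arc set of a graph. -/
def arcsOf {n : ℕ} (G : SimpleGraph (Fin n)) : Set (Fin n × Fin n) :=
  { p | G.Adj p.1 p.2 }

/-- `l(G)` for a graph `G`. -/
noncomputable def lG {n : ℕ} (G : SimpleGraph (Fin n)) : ℕ := lD (arcsOf G)

/-- Reachability along directed walks of `D`. -/
def dreach {n : ℕ} (D : Set (Fin n × Fin n)) : Fin n → Fin n → Prop :=
  Relation.ReflTransGen (fun a b => (a, b) ∈ D)

/-- The strong component of the vertex `v`. -/
def strongComp {n : ℕ} (D : Set (Fin n × Fin n)) (v : Fin n) : Set (Fin n) :=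
  { u | dreach D u v ∧ dreach D v u }

/-- The underlying graph of the digraph `D`. -/
def underlying {n : ℕ} (D : Set (Fin n × Fin n)) : SimpleGraph (Fin n) where
  Adj a b := a ≠ b ∧ ((a, b) ∈ D ∨ (b, a) ∈ D)
  symm := ⟨fun a b h => ⟨h.1.symm, h.2.symm⟩⟩
  loopless := ⟨fun a h => h.1 rfl⟩

/-- `v 0, v 1, …, v r` is a cycle of the digraph `D`. -/
def IsDCycle {n : ℕ} (D : Set (Fin n × Fin n)) (r : ℕ) (v : ℕ → Fin n) : Prop :=
  1 ≤ r ∧ v r = v 0 ∧ (∀ i < r, ∀ j < r, v i = v j → i = j) ∧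
    ∀ i < r, (v i, v (i + 1)) ∈ D

def HasDCycle {n : ℕ} (D : Set (Fin n × Fin n)) : Prop := ∃ r v, IsDCycle D r v

def DAcyclic {n : ℕ} (D : Set (Fin n × Fin n)) : Prop := ¬ HasDCycle D

/-- `G` is a subgroup contained in the transformation semigroup `S`. -/
def IsSubgroupIn {n : ℕ} (S G : Set (Fin n → Fin n)) : Prop :=
  G ⊆ S ∧ (∀ x ∈ G, ∀ y ∈ G, sgMul x y ∈ G) ∧
    ∃ e ∈ G, (∀ x ∈ G, sgMul e x = x ∧ sgMul x e = x) ∧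
      ∀ x ∈ G, ∃ y ∈ G, sgMul x y = e ∧ sgMul y x = e

/-- Every subgroup of `S` is trivial. -/
def SgAperiodic {n : ℕ} (S : Set (Fin n → Fin n)) : Prop :=
  ∀ G, IsSubgroupIn S G → G.Subsingleton

namespace Function

open Fintype Nat

variable {α : Type*} [Fintype α] (f : α → α)

theorem iterate_mem_periodicPts {m : ℕ} (hm : card α ≤ m) (x : α) :
    f^[m] x ∈ periodicPts f := by
  obtain ⟨i, j, hij, hfij⟩ := Fintype.exists_ne_map_eq_of_card_lt
    (fun i : Fin (card α + 1) => f^[i] x) (by simp)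
  wlog hlt : i < j generalizing i j
  · exact this j i hij.symm hfij.symm (lt_of_le_of_ne (not_lt.1 hlt) hij.symm)
  have hper : f^[i] x ∈ periodicPts f := by
    refine mk_mem_periodicPts (n := j - i) (by omega) ?_
    change f^[j - i] (f^[i] x) = f^[i] x
    rw [← iterate_add_apply, Nat.sub_add_cancel hlt.le]
    exact hfij.symm
  have := (bijOn_periodicPts f).mapsTo.iterate (m - i) hper
  rwa [← iterate_add_apply, Nat.sub_add_cancel (by omega)] at this

theorem iterate_add_mul_factorial_card {m : ℕ} (hm : card α ≤ m) (j : ℕ) :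
    f^[m + j * (card α)!] = f^[m] := by
  funext x
  rw [add_comm, iterate_add_apply]
  exact (isPeriodicPt_factorial_card_of_mem_periodicPts
    (iterate_mem_periodicPts f hm x)).const_mul j

end Function

open Function

section

variable {n : ℕ}

theorem isCycleOf_iff {f : Fin n → Fin n} {k : ℕ} :
    IsCycleOf f k ↔ ∃ x ∈ periodicPts f, minimalPeriod f x = k := by
  constructor
  · rintro ⟨hk, a, ha, hcyc⟩
    have : NeZero k := ⟨hk.ne'⟩
    have hiter : ∀ m, f^[m] (a 0) = a m := by
      intro m
      induction m with
      | zero => simp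
      | succ m ih => rw [iterate_succ_apply', ih, hcyc, Nat.cast_succ]
    have hper : IsPeriodicPt f k (a 0) := by
      change f^[k] (a 0) = a 0
      rw [hiter, ZMod.natCast_self]
    refine ⟨a 0, mk_mem_periodicPts hk hper,
      le_antisymm (Nat.le_of_dvd hk hper.minimalPeriod_dvd) ?_⟩
    have hmin : a (minimalPeriod f (a 0)) = a 0 := by rw [← hiter, iterate_minimalPeriod]
    refine Nat.le_of_dvd (hper.minimalPeriod_pos hk) ?_
    rw [← ZMod.natCast_eq_zero_iff]
    exact ha hmin
  · rintro ⟨x, hx, rfl⟩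
    have hpos := minimalPeriod_pos_of_mem_periodicPts hx
    have : NeZero (minimalPeriod f x) := ⟨hpos.ne'⟩
    refine ⟨hpos, fun i => f^[i.val] x, fun i j hij => ZMod.val_injective _ ?_, fun i => ?_⟩
    · exact iterate_injOn_Iio_minimalPeriod (ZMod.val_lt i) (ZMod.val_lt j) hij
    · change f (f^[i.val] x) = f^[(i + 1).val] x
      rw [← iterate_succ_apply' f, ← iterate_mod_minimalPeriod_eq, ZMod.val_add,
        ZMod.val_one_eq_one_mod, Nat.add_mod_mod]

theorem foldl_arcT_comp (l : List (Fin n × Fin n)) (g : Fin n → Fin n) :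
    l.foldl (fun f p => arcT p.1 p.2 ∘ f) g
      = l.foldl (fun f p => arcT p.1 p.2 ∘ f) id ∘ g := by
  induction l generalizing g with
  | nil => rfl
  | cons p l ih =>
    simp only [List.foldl_cons, ih (arcT p.1 p.2 ∘ g), ih (arcT p.1 p.2 ∘ id)]
    rfl

theorem arcT_mem_genSg {D : Set (Fin n × Fin n)} {a b : Fin n} (hab : (a, b) ∈ D) :
    arcT a b ∈ genSg D :=
  ⟨[(a, b)], List.cons_ne_nil _ _, by simpa using hab, rfl⟩

def IsMulClosed (S : Set (Fin n → Fin n)) : Prop := ∀ x ∈ S, ∀ y ∈ S, sgMul x y ∈ S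

theorem isMulClosed_genSg (D : Set (Fin n × Fin n)) : IsMulClosed (genSg D) := by
  rintro _ ⟨l₁, hl₁, hD₁, rfl⟩ _ ⟨l₂, -, hD₂, rfl⟩
  refine ⟨l₁ ++ l₂, by simp [hl₁], fun p hp => ?_, ?_⟩
  · rcases List.mem_append.1 hp with h | h
    exacts [hD₁ p h, hD₂ p h]
  · rw [List.foldl_append, foldl_arcT_comp l₂ (List.foldl _ id l₁)]
    rfl

theorem sgMul_iterate (f : Fin n → Fin n) (a b : ℕ) : sgMul (f^[a]) (f^[b]) = f^[a + b] := by
  rw [add_comm, iterate_add]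
  rfl

theorem IsMulClosed.iterate_succ_mem {S : Set (Fin n → Fin n)} (hS : IsMulClosed S)
    {f : Fin n → Fin n} (hf : f ∈ S) (m : ℕ) : f^[m + 1] ∈ S := by
  induction m with
  | zero => exact hf
  | succ m ih => simpa only [sgMul_iterate] using hS _ ih _ (show f^[1] ∈ S from hf)

theorem lD_eq_one_iff {D : Set (Fin n × Fin n)} (hD : D.Nonempty) :
    lD D = 1 ↔ ∀ α ∈ genSg D, periodicPts α ⊆ fixedPoints α := by
  set K := {k | ∃ α ∈ genSg D, IsCycleOf α k}
  have hbdd : BddAbove K := by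
    refine ⟨n, ?_⟩
    rintro k ⟨α, -, hk⟩
    obtain ⟨x, -, rfl⟩ := isCycleOf_iff.1 hk
    simpa using minimalPeriod_le_card (f := α) (x := x)
  have hmem : ∀ α ∈ genSg D, ∀ x ∈ periodicPts α, minimalPeriod α x ∈ K :=
    fun α hα x hx => ⟨α, hα, isCycleOf_iff.2 ⟨x, hx, rfl⟩⟩
  change sSup K = 1 ↔ _
  constructor
  · intro h α hα x hx
    refine minimalPeriod_eq_one_iff_isFixedPt.1 (le_antisymm ?_
      (minimalPeriod_pos_of_mem_periodicPts hx))
    exact h ▸ le_csSup hbdd (hmem α hα x hx)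
  · intro h
    obtain ⟨⟨a, b⟩, hab⟩ := hD
    suffices K = {1} by rw [this, csSup_singleton]
    ext k
    constructor
    · rintro ⟨α, hα, hk⟩
      obtain ⟨x, hx, rfl⟩ := isCycleOf_iff.1 hk
      exact minimalPeriod_eq_one_iff_isFixedPt.2 (h α hα hx)
    · rintro rfl
      have hper := iterate_mem_periodicPts (arcT a b) le_rfl a
      rw [← minimalPeriod_eq_one_iff_isFixedPt.2 (h _ (arcT_mem_genSg hab) hper)]
      exact hmem _ (arcT_mem_genSg hab) _ hper

section Green

variable {S : Set (Fin n → Fin n)}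

theorem rIdeal_sgMul_subset (hS : IsMulClosed S) {c : Fin n → Fin n} (hc : c ∈ S)
    (x : Fin n → Fin n) : rIdeal S (sgMul x c) ⊆ rIdeal S x := by
  rintro y (rfl | ⟨s, hs, rfl⟩)
  exacts [Or.inr ⟨c, hc, rfl⟩, Or.inr ⟨sgMul c s, hS c hc s hs, rfl⟩]

theorem lIdeal_sgMul_subset (hS : IsMulClosed S) {c : Fin n → Fin n} (hc : c ∈ S)
    (x : Fin n → Fin n) : lIdeal S (sgMul c x) ⊆ lIdeal S x := by
  rintro y (rfl | ⟨s, hs, rfl⟩)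
  exacts [Or.inr ⟨c, hc, rfl⟩, Or.inr ⟨sgMul s c, hS s hs c hc, rfl⟩]

theorem range_subset_of_mem_lIdeal {x y : Fin n → Fin n} (hy : y ∈ lIdeal S x) :
    Set.range y ⊆ Set.range x := by
  rcases hy with rfl | ⟨s, -, rfl⟩
  exacts [subset_rfl, Set.range_comp_subset_range s x]

theorem LRel.range_eq {x y : Fin n → Fin n} (h : LRel S x y) : Set.range x = Set.range y := by
  have hx : x ∈ lIdeal S y := by
    rw [← show lIdeal S x = lIdeal S y from h]; exact Set.mem_insert x _
  have hy : y ∈ lIdeal S x := by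
    rw [show lIdeal S x = lIdeal S y from h]; exact Set.mem_insert y _
  exact (range_subset_of_mem_lIdeal hx).antisymm (range_subset_of_mem_lIdeal hy)

namespace IsSubgroupIn

variable {G : Set (Fin n → Fin n)} {x y : Fin n → Fin n}

theorem exists_sgMul_right_eq (hG : IsSubgroupIn S G) (hx : x ∈ G) (hy : y ∈ G) :
    ∃ c ∈ G, sgMul x c = y := by
  obtain ⟨-, hmul, e, -, hid, hinv⟩ := hG
  obtain ⟨x', hx', hxx', -⟩ := hinv x hx
  refine ⟨sgMul x' y, hmul _ hx' _ hy, ?_⟩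
  change sgMul (sgMul x x') y = y
  rw [hxx', (hid y hy).1]

theorem exists_sgMul_left_eq (hG : IsSubgroupIn S G) (hx : x ∈ G) (hy : y ∈ G) :
    ∃ c ∈ G, sgMul c x = y := by
  obtain ⟨-, hmul, e, -, hid, hinv⟩ := hG
  obtain ⟨x', hx', -, hx'x⟩ := hinv x hx
  refine ⟨sgMul y x', hmul _ hy _ hx', ?_⟩
  change sgMul y (sgMul x' x) = y
  rw [hx'x, (hid y hy).2]

theorem rRel (hS : IsMulClosed S) (hG : IsSubgroupIn S G) (hx : x ∈ G) (hy : y ∈ G) :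
    RRel S x y := by
  obtain ⟨c, hc, rfl⟩ := hG.exists_sgMul_right_eq hx hy
  obtain ⟨d, hd, hd'⟩ := hG.exists_sgMul_right_eq (hG.2.1 _ hx _ hc) hx
  exact (hd' ▸ rIdeal_sgMul_subset hS (hG.1 hd) _).antisymm
    (rIdeal_sgMul_subset hS (hG.1 hc) x)

theorem lRel (hS : IsMulClosed S) (hG : IsSubgroupIn S G) (hx : x ∈ G) (hy : y ∈ G) :
    LRel S x y := by
  obtain ⟨c, hc, rfl⟩ := hG.exists_sgMul_left_eq hx hy
  obtain ⟨d, hd, hd'⟩ := hG.exists_sgMul_left_eq (hG.2.1 _ hc _ hx) hx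
  exact (hd' ▸ lIdeal_sgMul_subset hS (hG.1 hd) _).antisymm
    (lIdeal_sgMul_subset hS (hG.1 hc) x)

end IsSubgroupIn

theorem HTrivial.sgAperiodic (hS : IsMulClosed S) (hH : HTrivial S) : SgAperiodic S :=
  fun _ hG _ hx _ hy => hH _ (hG.1 hx) _ (hG.1 hy) (hG.rRel hS hx hy) (hG.lRel hS hx hy)

theorem hTrivial_of_periodicPts_subset_fixedPoints
    (h : ∀ s ∈ S, periodicPts s ⊆ fixedPoints s) : HTrivial S := by
  intro x _ y _ hR hL
  obtain rfl | ⟨s, hs, rfl⟩ : y ∈ rIdeal S x := by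
    rw [show rIdeal S x = rIdeal S y from hR]; exact Set.mem_insert y _
  · rfl
  have hrange : Set.range (s ∘ x) = Set.range x := hL.range_eq.symm
  have hiter : ∀ m, Set.range (s^[m] ∘ x) = Set.range x := by
    intro m
    induction m with
    | zero => rfl
    | succ m ih => rw [iterate_succ, comp_assoc, Set.range_comp, hrange, ← Set.range_comp, ih]
  have hfixed : Set.range x ⊆ fixedPoints s :=
    calc Set.range x = Set.range (s^[n] ∘ x) := (hiter n).symm
      _ ⊆ Set.range (s^[n]) := Set.range_comp_subset_range _ _
      _ ⊆ periodicPts s := by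
        rintro _ ⟨w, rfl⟩
        exact iterate_mem_periodicPts s (by simp) w
      _ ⊆ fixedPoints s := h s hs
  funext w
  exact (hfixed ⟨w, rfl⟩).symm

end Green

section CyclicSubgroup

variable {S : Set (Fin n → Fin n)} {f : Fin n → Fin n}

theorem iterate_add_mul_factorial {m : ℕ} (hm : n ≤ m) (j : ℕ) :
    f^[m + j * n.factorial] = f^[m] := by
  simpa using iterate_add_mul_factorial_card f (α := Fin n) (by simpa using hm) j

theorem isSubgroupIn_range_iterate (hS : IsMulClosed S) (hf : f ∈ S) :
    IsSubgroupIn S (Set.range fun m => f^[n.factorial + m]) := by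
  obtain ⟨N, hN⟩ := Nat.exists_eq_succ_of_ne_zero (Nat.factorial_ne_zero n)
  have hle : n ≤ n.factorial := Nat.self_le_factorial n
  refine ⟨?_, ?_, f^[n.factorial + 0], ⟨0, rfl⟩, ?_, ?_⟩
  · rintro _ ⟨m, rfl⟩
    simpa only [hN, Nat.succ_add] using hS.iterate_succ_mem hf (N + m)
  · rintro _ ⟨a, rfl⟩ _ ⟨b, rfl⟩
    exact ⟨a + (n.factorial + b), by simp only [sgMul_iterate, add_assoc]⟩
  · rintro _ ⟨a, rfl⟩
    simp only [sgMul_iterate]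
    constructor
    · rw [add_zero, add_comm, ← one_mul (n.factorial), iterate_add_mul_factorial (by omega)]
    · rw [add_zero, ← one_mul (n.factorial), iterate_add_mul_factorial (by omega)]
  · rintro _ ⟨a, rfl⟩
    have hexp : n.factorial + a + (n.factorial + a * (n.factorial - 1))
        = n.factorial + 0 + (a + 1) * n.factorial := by
      rw [hN, Nat.succ_sub_one, Nat.succ_eq_add_one]
      ring
    refine ⟨f^[n.factorial + a * (n.factorial - 1)], ⟨_, rfl⟩, ?_, ?_⟩ <;>
      simp only [sgMul_iterate]
    · rw [hexp, iterate_add_mul_factorial (by omega)]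
    · rw [add_comm, hexp, iterate_add_mul_factorial (by omega)]

theorem iterate_factorial_ne_iterate_succ {x : Fin n} (hx : x ∈ periodicPts f)
    (hfix : ¬IsFixedPt f x) : f^[n.factorial] ≠ f^[n.factorial + 1] := by
  have hper : f^[n.factorial] x = x := by
    simpa using (isPeriodicPt_factorial_card_of_mem_periodicPts hx).eq
  intro h
  have hx' := congrFun h x
  rw [iterate_succ_apply', hper] at hx'
  exact hfix hx'.symm

theorem not_sgAperiodic_of_not_isFixedPt (hS : IsMulClosed S) (hf : f ∈ S) {x : Fin n}
    (hx : x ∈ periodicPts f) (hfix : ¬IsFixedPt f x) : ¬SgAperiodic S := fun h =>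
  iterate_factorial_ne_iterate_succ hx hfix <|
    h _ (isSubgroupIn_range_iterate hS hf) ⟨0, rfl⟩ ⟨1, rfl⟩

end CyclicSubgroup

end

theorem stmt1_general (n : ℕ) (D : Set (Fin n × Fin n)) (hne : D.Nonempty) :
    List.TFAE [lD D = 1, SgAperiodic (genSg D), HTrivial (genSg D)] := by
  tfae_have 1 → 3 := fun h =>
    hTrivial_of_periodicPts_subset_fixedPoints ((lD_eq_one_iff hne).1 h)
  tfae_have 3 → 2 := HTrivial.sgAperiodic (isMulClosed_genSg D)
  tfae_have 2 → 1 := fun h => (lD_eq_one_iff hne).2 fun α hα x hx => by_contra fun hfix =>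
    not_sgAperiodic_of_not_isFixedPt (isMulClosed_genSg D) hα hx hfix h
  tfae_finish

/-- For a digraph with at least one arc: `l(D) = 1`, `⟨D⟩` aperiodic and
`⟨D⟩` being `H`-trivial are equivalent. -/
theorem stmt1 (n : ℕ) (D : Set (Fin n × Fin n)) (hloop : ∀ a : Fin n, (a, a) ∉ D)
    (hne : D.Nonempty) :
    List.TFAE [lD D = 1, SgAperiodic (genSg D), HTrivial (genSg D)] :=
  stmt1_general n D hne
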